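/- For image-finite s₂, iuoe-refinement implies the trace-based game relation: if every state of s₂ has finitely many ℓ-successors for each label ℓ, and OE(s₁) ∩ IU(s₂) ⊆ IU(s₁) ∩ OE(s₂), then s₁ ≤_{∀∀∃∃}^{tb} s₂. -/

import Mathlib

/-- An interface automaton over inputs `In`, outputs `Out`, states `State`. -/
structure IA (In Out State : Type) where
  init : State
  tr : State → (In ⊕ Out) → State → Prop

namespace IA

variable {In Out State State1 State2 State3 : Type}

/-- One-step successor sets. -/
def step (s : IA In Out State) (P : Set State) (ℓ : In ⊕ Out) : Set State :=
  {q' | ∃ q ∈ P, s.tr q ℓ q'}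

/-- `s after σ`: states reachable from the initial state via word `σ`. -/
def after (s : IA In Out State) (σ : List (In ⊕ Out)) : Set State :=
  σ.foldl s.step {s.init}

/-- Traces of `s`. -/
def traces (s : IA In Out State) : Set (List (In ⊕ Out)) :=
  {σ | (s.after σ).Nonempty}

/-- Inputs enabled in *all* states of `P`. -/
def inSet (s : IA In Out State) (P : Set State) : Set In :=
  {a | ∀ q ∈ P, ∃ q', s.tr q (Sum.inl a) q'}

/-- Outputs enabled in *some* state of `P`. -/
def outSet (s : IA In Out State) (P : Set State) : Set Out :=
  {x | ∃ q ∈ P, ∃ q', s.tr q (Sum.inr x) q'}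

end IA

/-- Input-failure traces: a word over `L = In ⊕ Out` possibly followed by a
    final input-failure symbol `ā` (encoded as `some a`). -/
abbrev FTrace (In Out : Type) := List (In ⊕ Out) × Option In

/-- A set of input-failure traces is input-failure closed. -/
def fclosed {In Out : Type} (S : Set (FTrace In Out)) : Prop :=
  ∀ (σ : List (In ⊕ Out)) (a : In) (ρ : FTrace In Out),
    (σ, some a) ∈ S → (σ ++ Sum.inl a :: ρ.1, ρ.2) ∈ S

/-- Input-failure closure. -/
def fcl {In Out : Type} (S : Set (FTrace In Out)) : Set (FTrace In Out) :=
  S ∪ {t | ∃ (σ : List (In ⊕ Out)) (a : In) (ρ : FTrace In Out),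
        (σ, some a) ∈ S ∧ t = (σ ++ Sum.inl a :: ρ.1, ρ.2)}

namespace IA

variable {In Out State State1 State2 State3 : Type}

/-- Input-failure traces of an IA. -/
def Ftraces (s : IA In Out State) : Set (FTrace In Out) :=
  {t | (t.2 = none ∧ t.1 ∈ s.traces) ∨
       (∃ a, t.2 = some a ∧ a ∉ s.inSet (s.after t.1))}

/-- Input-failure refinement. -/
def refIF (s1 : IA In Out State1) (s2 : IA In Out State2) : Prop :=
  s1.Ftraces ⊆ fcl s2.Ftraces

/-- Output-existential words of `s`. -/
def OE (s : IA In Out State) : Set (List (In ⊕ Out)) :=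
  {σ | ∀ ρ x τ, σ = ρ ++ Sum.inr x :: τ → x ∈ s.outSet (s.after ρ)}

/-- Input-universal words of `s`. -/
def IU (s : IA In Out State) : Set (List (In ⊕ Out)) :=
  {σ | ∀ ρ a τ, σ = ρ ++ Sum.inl a :: τ → a ∈ s.inSet (s.after ρ)}

/-- Input-universal / output-existential refinement. -/
def refIUOE (s1 : IA In Out State1) (s2 : IA In Out State2) : Prop :=
  s1.OE ∩ s2.IU ⊆ s1.IU ∩ s2.OE

/-- Utraces: traces where every occurring input is enabled in all states
    reached by the preceding prefix. -/
def Utraces (s : IA In Out State) : Set (List (In ⊕ Out)) :=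
  {σ | σ ∈ s.traces ∧
       ∀ ρ a, (ρ ++ [Sum.inl a]) <+: σ → a ∈ s.inSet (s.after ρ)}

/-- `Δ`: add a `δ`-selfloop (a fresh output) to each quiescent state. -/
def delta (s : IA In Out State) : IA In (Out ⊕ Unit) State where
  init := s.init
  tr := fun q ℓ q' =>
    match ℓ with
    | Sum.inl a => s.tr q (Sum.inl a) q'
    | Sum.inr (Sum.inl x) => s.tr q (Sum.inr x) q'
    | Sum.inr (Sum.inr _) => q' = q ∧ ∀ x q'', ¬ s.tr q (Sum.inr x) q''

/-- `i uioco s`. -/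
def uioco (i : IA In Out State1) (s : IA In Out State2) : Prop :=
  ∀ σ ∈ (delta s).Utraces,
    (delta i).outSet ((delta i).after σ) ⊆ (delta s).outSet ((delta s).after σ) ∧
    (delta s).inSet ((delta s).after σ) ⊆ (delta i).inSet ((delta i).after σ)

/-! ### Game framework -/

/-- A (finite) path: a list of (label, target-state) steps from the initial state. -/
abbrev Path (In Out State : Type) := List ((In ⊕ Out) × State)

/-- The state reached just before step `n` of `π` (the initial state for `n = 0`). -/
def stateAt (s : IA In Out State) (π : Path In Out State) : ℕ → State
  | 0 => s.init
  | Nat.succ m => ((π[m]?).map Prod.snd).getD s.init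

/-- The final state of a path. -/
def lastState (s : IA In Out State) (π : Path In Out State) : State :=
  stateAt s π π.length

/-- Validity of a path. -/
def IsPath (s : IA In Out State) (π : Path In Out State) : Prop :=
  ∀ n p, π[n]? = some p → s.tr (stateAt s π n) p.1 p.2

/-- Output strategies. -/
structure OutStrat (s : IA In Out State) where
  f : Path In Out State → Option Out
  valid : ∀ π x, IsPath s π → f π = some x →
    ∃ q', s.tr (lastState s π) (Sum.inr x) q'

/-- Input strategies. -/
structure InStrat (s : IA In Out State) where
  f : Path In Out State → Option In
  valid : ∀ π a, IsPath s π → f π = some a →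
    ∃ q', s.tr (lastState s π) (Sum.inl a) q'

/-- Determinization strategies. -/
structure DetStrat (s : IA In Out State) where
  f : Path In Out State → (In ⊕ Out) → Option State
  total : ∀ π ℓ, IsPath s π → (∃ q', s.tr (lastState s π) ℓ q') → (f π ℓ).isSome
  valid : ∀ π ℓ q', IsPath s π → f π ℓ = some q' → s.tr (lastState s π) ℓ q'

/-- Race-condition strategies: `false` = prefer input, `true` = prefer output. -/
abbrev RaceStrat (In Out State : Type) := Path In Out State → Bool

/-- An input strategy is trace-based if it depends only on the trace of the path. -/
def TraceBased (s : IA In Out State) (fi : InStrat s) : Prop :=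
  ∀ π π', IsPath s π → IsPath s π' →
    π.map Prod.fst = π'.map Prod.fst → fi.f π = fi.f π'

/-- Extend a path by label `ℓ` using the determinization strategy. -/
def push (s : IA In Out State) (fd : DetStrat s) (π : Path In Out State)
    (ℓ : In ⊕ Out) : Path In Out State :=
  match fd.f π ℓ with
  | some q => π ++ [(ℓ, q)]
  | none => π

/-- One step of the strategy-driven execution. -/
def gstep (s : IA In Out State) (fi : InStrat s) (fo : OutStrat s)
    (fd : DetStrat s) (fr : RaceStrat In Out State)
    (π : Path In Out State) : Path In Out State :=
  match fi.f π, fo.f π with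
  | some a, none => push s fd π (Sum.inl a)
  | none, some x => push s fd π (Sum.inr x)
  | some a, some x => if fr π then push s fd π (Sum.inr x) else push s fd π (Sum.inl a)
  | none, none => π

/-- The `n`-th label of the (finite or infinite) outcome of the four strategies. -/
def outcomeTrace (s : IA In Out State) (fi : InStrat s) (fo : OutStrat s)
    (fd : DetStrat s) (fr : RaceStrat In Out State) (n : ℕ) : Option (In ⊕ Out) :=
  (((gstep s fi fo fd fr)^[n + 1] ([] : Path In Out State))[n]?).map Prod.fst

/-- Alternating-trace containment for IA. -/
def refATC (s1 : IA In Out State1) (s2 : IA In Out State2) : Prop :=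
  ∀ (fo1 : OutStrat s1) (fd1 : DetStrat s1) (fr1 : RaceStrat In Out State1),
  ∃ (fo2 : OutStrat s2) (fd2 : DetStrat s2) (fr2 : RaceStrat In Out State2),
  ∀ (fi2 : InStrat s2), ∃ (fi1 : InStrat s1),
    ∀ n, outcomeTrace s1 fi1 fo1 fd1 fr1 n = outcomeTrace s2 fi2 fo2 fd2 fr2 n

/-- The reordered, trace-based game relation `≤_{∀∀∃∃}^{tb}`. -/
def refAAEEtb (s1 : IA In Out State1) (s2 : IA In Out State2) : Prop :=
  ∀ (fi2 : InStrat s2), TraceBased s2 fi2 →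
  ∀ (fo1 : OutStrat s1) (fd1 : DetStrat s1) (fr1 : RaceStrat In Out State1),
  ∃ (fi1 : InStrat s1), TraceBased s1 fi1 ∧
  ∃ (fo2 : OutStrat s2) (fd2 : DetStrat s2) (fr2 : RaceStrat In Out State2),
    ∀ n, outcomeTrace s1 fi1 fo1 fd1 fr1 n = outcomeTrace s2 fi2 fo2 fd2 fr2 n

/-- Alternating simulation. -/
def IsAltSim (s1 : IA In Out State1) (s2 : IA In Out State2)
    (R : State1 → State2 → Prop) : Prop :=
  ∀ q1 q2, R q1 q2 →
    (s1.outSet {q1} ⊆ s2.outSet {q2}) ∧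
    (s2.inSet {q2} ⊆ s1.inSet {q1}) ∧
    (∀ a q1', a ∈ s2.inSet {q2} → s1.tr q1 (Sum.inl a) q1' →
       ∃ q2', s2.tr q2 (Sum.inl a) q2' ∧ R q1' q2') ∧
    (∀ x q1', s1.tr q1 (Sum.inr x) q1' →
       ∃ q2', s2.tr q2 (Sum.inr x) q2' ∧ R q1' q2')

/-- Greatest alternating simulation relates the initial states. -/
def refAS (s1 : IA In Out State1) (s2 : IA In Out State2) : Prop :=
  ∃ R, IsAltSim s1 s2 R ∧ R s1.init s2.init

/-- Image finiteness. -/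
def ImageFinite (s : IA In Out State) : Prop :=
  ∀ q ℓ, {q' | s.tr q ℓ q'}.Finite

/-- Input-universal determinization (subset construction restricted to
    universally enabled inputs and existentially enabled outputs). -/
def detIU (s : IA In Out State) : IA In Out (Set State) where
  init := {s.init}
  tr := fun P ℓ P' => P.Nonempty ∧
    (match ℓ with
     | Sum.inl a => a ∈ s.inSet P
     | Sum.inr x => x ∈ s.outSet P) ∧
    P' = s.step P ℓ

end IA

section Aux

open IA

variable {In Out State : Type}

lemma concat_eq_append_cons {α : Type*} {l ρ τ : List α} {b c : α}
    (h : l ++ [b] = ρ ++ c :: τ) :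
    (ρ = l ∧ c = b ∧ τ = []) ∨ ∃ τ', τ = τ' ++ [b] ∧ l = ρ ++ c :: τ' := by
  rcases List.eq_nil_or_concat τ with rfl | ⟨τ', b', rfl⟩
  · left
    have h2 := List.append_inj' h rfl
    exact ⟨h2.1.symm, (by simpa using h2.2.symm), rfl⟩
  · right
    simp only [List.concat_eq_append] at h ⊢
    rw [show ρ ++ c :: (τ' ++ [b']) = (ρ ++ c :: τ') ++ [b'] by simp] at h
    have h2 := List.append_inj' h rfl
    obtain ⟨rfl, h3⟩ := h2
    simp only [List.cons.injEq] at h3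
    exact ⟨τ', by simp [h3.1], rfl⟩

lemma get?_concat_cases {α : Type*} {l : List α} {b : α} {k : ℕ} {c : α}
    (h : (l ++ [b])[k]? = some c) :
    l[k]? = some c ∨ (k = l.length ∧ c = b) := by
  rcases lt_trichotomy k l.length with hk | hk | hk
  · left; rwa [List.getElem?_append_left hk] at h
  · right
    subst hk
    rw [List.getElem?_concat_length] at h
    exact ⟨rfl, by injection h.symm⟩
  · have : (l ++ [b])[k]? = none := List.getElem?_eq_none_iff.2 (by simp; omega)
    rw [this] at h; cases h

lemma get?_eq_of_prefix {α : Type*} {l1 l2 : List α} (h : l1 <+: l2) {n : ℕ} {a : α}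
    (h2 : l1[n]? = some a) : l2[n]? = some a := by
  obtain ⟨t, rfl⟩ := h
  have hn : n < l1.length := (List.getElem?_eq_some_iff.1 h2).1
  rwa [List.getElem?_append_left hn]

namespace IA

lemma after_concat (s : IA In Out State) (σ : List (In ⊕ Out)) (ℓ : In ⊕ Out) :
    s.after (σ ++ [ℓ]) = s.step (s.after σ) ℓ := by
  simp [IA.after, List.foldl_append]

lemma stateAt_append_le (s : IA In Out State) (π ρ : Path In Out State) {n : ℕ}
    (h : n ≤ π.length) : stateAt s (π ++ ρ) n = stateAt s π n := by
  cases n with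
  | zero => rfl
  | succ m =>
    simp only [stateAt]
    rw [List.getElem?_append_left (show m < π.length by omega)]

lemma lastState_concat (s : IA In Out State) (π : Path In Out State)
    (p : (In ⊕ Out) × State) : lastState s (π ++ [p]) = p.2 := by
  simp [lastState, stateAt, List.getElem?_concat_length]

lemma isPath_nil (s : IA In Out State) : IsPath s ([] : Path In Out State) := by
  intro n p hp; simp at hp

lemma isPath_concat_iff (s : IA In Out State) (π : Path In Out State)
    (p : (In ⊕ Out) × State) :
    IsPath s (π ++ [p]) ↔ IsPath s π ∧ s.tr (lastState s π) p.1 p.2 := by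
  constructor
  · intro hp
    constructor
    · intro n q hq
      have hn : n < π.length := (List.getElem?_eq_some_iff.1 hq).1
      have := hp n q (by rwa [List.getElem?_append_left hn])
      rwa [stateAt_append_le s π [p] (by omega)] at this
    · have := hp π.length p (List.getElem?_concat_length)
      rwa [stateAt_append_le s π [p] le_rfl] at this
  · rintro ⟨h1, h2⟩ n q hq
    rcases get?_concat_cases hq with hq' | ⟨rfl, hqb⟩
    · have hn : n < π.length := (List.getElem?_eq_some_iff.1 hq').1
      rw [stateAt_append_le s π [p] (by omega)]
      exact h1 n q hq'
    · rw [hqb, stateAt_append_le s π [p] le_rfl]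
      exact h2

lemma mem_after_iff (s : IA In Out State) (σ : List (In ⊕ Out)) (q : State) :
    q ∈ s.after σ ↔ ∃ π : Path In Out State,
      IsPath s π ∧ π.map Prod.fst = σ ∧ lastState s π = q := by
  induction σ using List.reverseRecOn generalizing q with
  | nil =>
    constructor
    · intro hq
      refine ⟨[], isPath_nil s, rfl, ?_⟩
      have : q = s.init := hq
      simp [lastState, stateAt, this]
    · rintro ⟨π, hπ, hmap, rfl⟩
      have : π = [] := by simpa using congrArg List.length hmap
      subst this
      rfl
  | append_singleton τ ℓ ih =>
    rw [after_concat]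
    constructor
    · rintro ⟨q0, hq0, htr⟩
      obtain ⟨π0, hπ0, hmap0, hlast0⟩ := (ih q0).1 hq0
      refine ⟨π0 ++ [(ℓ, q)], ?_, by simp [hmap0], lastState_concat _ _ _⟩
      rw [isPath_concat_iff]
      exact ⟨hπ0, by rw [hlast0]; exact htr⟩
    · rintro ⟨π, hπ, hmap, rfl⟩
      rcases List.eq_nil_or_concat π with rfl | ⟨π0, p, rfl⟩
      · simp at hmap
      · simp only [List.concat_eq_append] at hπ hmap ⊢
        rw [List.map_append] at hmap
        obtain ⟨hm0, hm1⟩ := List.append_inj' hmap rfl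
        simp only [List.map_cons, List.map_nil, List.cons.injEq] at hm1
        rw [isPath_concat_iff] at hπ
        rw [lastState_concat]
        exact ⟨lastState s π0, (ih _).2 ⟨π0, hπ.1, hm0, rfl⟩, by rw [← hm1.1]; exact hπ.2⟩

lemma lastState_mem_after (s : IA In Out State) {π : Path In Out State}
    (h : IsPath s π) : lastState s π ∈ s.after (π.map Prod.fst) :=
  (mem_after_iff s _ _).2 ⟨π, h, rfl, rfl⟩

lemma OE_concat_in {s : IA In Out State} {σ : List (In ⊕ Out)} {a : In}
    (h : σ ∈ s.OE) : σ ++ [Sum.inl a] ∈ s.OE := by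
  intro ρ x τ he
  rcases concat_eq_append_cons he with ⟨rfl, hc, rfl⟩ | ⟨τ', rfl, rfl⟩
  · cases hc
  · exact h ρ x τ' rfl

lemma OE_concat_out {s : IA In Out State} {σ : List (In ⊕ Out)} {x : Out}
    (h : σ ∈ s.OE) (hx : x ∈ s.outSet (s.after σ)) : σ ++ [Sum.inr x] ∈ s.OE := by
  intro ρ y τ he
  rcases concat_eq_append_cons he with ⟨rfl, hc, rfl⟩ | ⟨τ', rfl, rfl⟩
  · injection hc with hc; subst hc; exact hx
  · exact h ρ y τ' rfl

lemma IU_concat_out {s : IA In Out State} {σ : List (In ⊕ Out)} {x : Out}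
    (h : σ ∈ s.IU) : σ ++ [Sum.inr x] ∈ s.IU := by
  intro ρ a τ he
  rcases concat_eq_append_cons he with ⟨rfl, hc, rfl⟩ | ⟨τ', rfl, rfl⟩
  · cases hc
  · exact h ρ a τ' rfl

lemma IU_concat_in {s : IA In Out State} {σ : List (In ⊕ Out)} {a : In}
    (h : σ ∈ s.IU) (ha : a ∈ s.inSet (s.after σ)) : σ ++ [Sum.inl a] ∈ s.IU := by
  intro ρ b τ he
  rcases concat_eq_append_cons he with ⟨rfl, hc, rfl⟩ | ⟨τ', rfl, rfl⟩
  · injection hc with hc; subst hc; exact ha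
  · exact h ρ b τ' rfl

lemma nil_mem_OE (s : IA In Out State) : ([] : List (In ⊕ Out)) ∈ s.OE := by
  intro ρ x τ he
  have := congrArg List.length he
  simp at this

lemma nil_mem_IU (s : IA In Out State) : ([] : List (In ⊕ Out)) ∈ s.IU := by
  intro ρ x τ he
  have := congrArg List.length he
  simp at this

lemma gstep_cases (s : IA In Out State) (fi : InStrat s) (fo : OutStrat s)
    (fd : DetStrat s) (fr : RaceStrat In Out State) {π : Path In Out State}
    (hπ : IsPath s π) :
    (gstep s fi fo fd fr π = π ∧ fi.f π = none ∧ fo.f π = none) ∨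
    (∃ a q, fi.f π = some a ∧ s.tr (lastState s π) (Sum.inl a) q ∧
        gstep s fi fo fd fr π = π ++ [(Sum.inl a, q)]) ∨
    (∃ x q, fo.f π = some x ∧ s.tr (lastState s π) (Sum.inr x) q ∧
        gstep s fi fo fd fr π = π ++ [(Sum.inr x, q)]) := by
  have pushIn : ∀ a, fi.f π = some a →
      ∃ q, s.tr (lastState s π) (Sum.inl a) q ∧ push s fd π (Sum.inl a) = π ++ [(Sum.inl a, q)] := by
    intro a ha
    have hen := fi.valid π a hπ ha
    have hsome := fd.total π (Sum.inl a) hπ hen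
    obtain ⟨q, hq⟩ := Option.isSome_iff_exists.1 hsome
    exact ⟨q, fd.valid π _ q hπ hq, by simp [IA.push, hq]⟩
  have pushOut : ∀ x, fo.f π = some x →
      ∃ q, s.tr (lastState s π) (Sum.inr x) q ∧ push s fd π (Sum.inr x) = π ++ [(Sum.inr x, q)] := by
    intro x hx
    have hen := fo.valid π x hπ hx
    have hsome := fd.total π (Sum.inr x) hπ hen
    obtain ⟨q, hq⟩ := Option.isSome_iff_exists.1 hsome
    exact ⟨q, fd.valid π _ q hπ hq, by simp [IA.push, hq]⟩
  rcases hfi : fi.f π with _ | a <;> rcases hfo : fo.f π with _ | x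
  · left; exact ⟨by simp [IA.gstep, hfi, hfo], rfl, rfl⟩
  · obtain ⟨q, htr, hpush⟩ := pushOut x hfo
    right; right
    exact ⟨x, q, rfl, htr, by rw [IA.gstep, hfi, hfo]; exact hpush⟩
  · obtain ⟨q, htr, hpush⟩ := pushIn a hfi
    right; left
    exact ⟨a, q, rfl, htr, by rw [IA.gstep, hfi, hfo]; exact hpush⟩
  · rcases hfr : fr π with _ | _
    · obtain ⟨q, htr, hpush⟩ := pushIn a hfi
      right; left
      refine ⟨a, q, rfl, htr, ?_⟩
      rw [IA.gstep, hfi, hfo]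
      simp only [hfr, if_false, Bool.false_eq_true]
      exact hpush
    · obtain ⟨q, htr, hpush⟩ := pushOut x hfo
      right; right
      refine ⟨x, q, rfl, htr, ?_⟩
      rw [IA.gstep, hfi, hfo]
      simp only [hfr, if_true]
      exact hpush

end IA

end Aux
section Konig

open IA

variable {In Out State : Type}

def iterStep (s : IA In Out State) (lab : ℕ → In ⊕ Out) (P : Set State) (n : ℕ) :
    ℕ → Set State
  | 0 => P
  | k+1 => s.step (iterStep s lab P n k) (lab (n+k))

lemma step_empty (s : IA In Out State) (ℓ : In ⊕ Out) : s.step ∅ ℓ = ∅ := by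
  ext q; simp [IA.step]

lemma iterStep_shift (s : IA In Out State) (lab : ℕ → In ⊕ Out) (P : Set State)
    (n k : ℕ) :
    iterStep s lab P n (k+1) = iterStep s lab (s.step P (lab n)) (n+1) k := by
  induction k with
  | zero => simp [iterStep]
  | succ m ih =>
    show s.step (iterStep s lab P n (m+1)) (lab (n+(m+1)))
        = s.step (iterStep s lab (s.step P (lab n)) (n+1) m) (lab (n+1+m))
    rw [ih, show n+(m+1) = n+1+m by omega]

lemma step_iUnion {ι : Type*} (s : IA In Out State) (t : Set ι) (f : ι → Set State)
    (ℓ : In ⊕ Out) : s.step (⋃ i ∈ t, f i) ℓ = ⋃ i ∈ t, s.step (f i) ℓ := by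
  ext q'
  simp only [IA.step, Set.mem_iUnion, Set.mem_setOf_eq]
  tauto

lemma step_biUnion (s : IA In Out State) (P : Set State) (ℓ : In ⊕ Out) :
    s.step P ℓ = ⋃ q ∈ P, s.step {q} ℓ := by
  ext q'
  simp only [IA.step, Set.mem_iUnion, Set.mem_setOf_eq, Set.mem_singleton_iff]
  constructor
  · rintro ⟨q, hq, htr⟩; exact ⟨q, hq, q, rfl, htr⟩
  · rintro ⟨q, hq, q0, rfl, htr⟩; exact ⟨q0, hq, htr⟩

lemma iterStep_biUnion (s : IA In Out State) (lab : ℕ → In ⊕ Out) (P : Set State)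
    (n k : ℕ) :
    iterStep s lab P n k = ⋃ q ∈ P, iterStep s lab {q} n k := by
  induction k with
  | zero => simp [iterStep]
  | succ m ih =>
    show s.step (iterStep s lab P n m) (lab (n+m)) = ⋃ q ∈ P, iterStep s lab {q} n (m+1)
    rw [ih, step_iUnion]
    rfl

lemma step_finite {s : IA In Out State} (hfin : s.ImageFinite) {P : Set State}
    (hP : P.Finite) (ℓ : In ⊕ Out) : (s.step P ℓ).Finite := by
  rw [step_biUnion]
  refine Set.Finite.biUnion hP (fun q _ => ?_)
  have : s.step {q} ℓ = {q' | s.tr q ℓ q'} := by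
    ext q'
    simp only [IA.step, Set.mem_setOf_eq, Set.mem_singleton_iff]
    constructor
    · rintro ⟨q0, rfl, htr⟩; exact htr
    · intro htr; exact ⟨q, rfl, htr⟩
  rw [this]
  exact hfin q ℓ

lemma iterStep_mono_empty (s : IA In Out State) (lab : ℕ → In ⊕ Out) (q : State)
    (n : ℕ) {k k' : ℕ} (hle : k ≤ k')
    (h : iterStep s lab {q} n k = ∅) : iterStep s lab {q} n k' = ∅ := by
  induction k', hle using Nat.le_induction with
  | base => exact h
  | succ m hm ih =>
    show s.step (iterStep s lab {q} n m) (lab (n+m)) = ∅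
    rw [ih, step_empty]

lemma exists_uniform_bound {α : Type*} {S : Set α} (hS : S.Finite) (P : α → ℕ → Prop)
    (hmono : ∀ q k k', k ≤ k' → P q k → P q k') (h : ∀ q ∈ S, ∃ k, P q k) :
    ∃ K, ∀ q ∈ S, P q K := by
  revert h
  refine Set.Finite.induction_on _ hS (fun _ => ⟨0, by simp⟩) ?_
  intro a S ha hSfin ih h
  obtain ⟨K, hK⟩ := ih (fun q hq => h q (Set.mem_insert_of_mem a hq))
  obtain ⟨k, hk⟩ := h a (Set.mem_insert a S)
  refine ⟨max K k, ?_⟩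
  rintro q (rfl | hq)
  · exact hmono q k _ (le_max_right _ _) hk
  · exact hmono q K _ (le_max_left _ _) (hK q hq)

lemma koenig_succ {s : IA In Out State} (hfin : s.ImageFinite) (lab : ℕ → In ⊕ Out)
    (n : ℕ) (q : State) (hq : ∀ k, (iterStep s lab {q} n k).Nonempty) :
    ∃ q', s.tr q (lab n) q' ∧ ∀ k, (iterStep s lab {q'} (n+1) k).Nonempty := by
  by_contra hcon
  have hS : ∀ q' ∈ s.step {q} (lab n), ∃ k, iterStep s lab {q'} (n+1) k = ∅ := by
    intro q' hq'
    have htr : s.tr q (lab n) q' := by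
      obtain ⟨q0, hq0, htr⟩ := hq'
      rwa [show q0 = q from hq0] at htr
    by_contra h2
    push_neg at h2
    exact hcon ⟨q', htr, h2⟩
  have hSfin : (s.step {q} (lab n)).Finite :=
    step_finite hfin (Set.finite_singleton q) _
  obtain ⟨K, hK⟩ := exists_uniform_bound hSfin
    (fun q' k => iterStep s lab {q'} (n+1) k = ∅)
    (fun q' k k' hle hk => iterStep_mono_empty s lab q' (n+1) hle hk) hS
  have h1 := hq (K+1)
  rw [iterStep_shift, iterStep_biUnion] at h1
  obtain ⟨q', hq'⟩ := h1
  simp only [Set.mem_iUnion] at hq'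
  obtain ⟨q0, hq0, hmem⟩ := hq'
  rw [hK q0 hq0] at hmem
  exact hmem

end Konig
open IA in
theorem stmt15 (In Out State1 State2 : Type)
    (s1 : IA In Out State1) (s2 : IA In Out State2)
    (hfin : s2.ImageFinite) (h : s1.refIUOE s2) : s1.refAAEEtb s2 := by
  classical
  intro fi2 htb fo1 fd1 fr1
  -- the trace-level input oracle extracted from fi2
  set g : List (In ⊕ Out) → Option In := fun τ =>
    if hτ : ∃ π : Path In Out State2, IsPath s2 π ∧ π.map Prod.fst = τ then fi2.f hτ.choose
    else none with hg
  have g_eq : ∀ π : Path In Out State2, IsPath s2 π → g (π.map Prod.fst) = fi2.f π := by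
    intro π hπ
    have hex : ∃ π' : Path In Out State2, IsPath s2 π' ∧ π'.map Prod.fst = π.map Prod.fst :=
      ⟨π, hπ, rfl⟩
    rw [hg]
    dsimp only
    rw [dif_pos hex]
    exact htb hex.choose π hex.choose_spec.1 hπ hex.choose_spec.2
  have gkey : ∀ (τ : List (In ⊕ Out)) (a : In), g τ = some a →
      a ∈ s2.inSet (s2.after τ) := by
    intro τ a hga q hq
    obtain ⟨πq, hπq, hmapq, hlastq⟩ := (mem_after_iff s2 τ q).1 hq
    have hfa : fi2.f πq = some a := by rw [← g_eq πq hπq, hmapq]; exact hga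
    obtain ⟨q', hq'⟩ := fi2.valid πq a hπq hfa
    exact ⟨q', by rwa [hlastq] at hq'⟩
  -- the input strategy for s1
  set f1fun : List (In ⊕ Out) → Option In := fun σ =>
    match g σ with
    | some a => if a ∈ s1.inSet (s1.after σ) then some a else none
    | none => none
    with hf1fun
  have hfs : ∀ σ a, f1fun σ = some a ↔ g σ = some a ∧ a ∈ s1.inSet (s1.after σ) := by
    intro σ a
    rw [hf1fun]
    dsimp only
    rcases hg2 : g σ with _ | a'
    · simp
    · by_cases hmem : a' ∈ s1.inSet (s1.after σ)
      · show (if a' ∈ s1.inSet (s1.after σ) then some a' else none) = some a ↔ _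
        rw [if_pos hmem]
        constructor
        · intro h'; injection h' with h'; subst h'; exact ⟨rfl, hmem⟩
        · rintro ⟨h1, _⟩; injection h1 with h1; subst h1; rfl
      · show (if a' ∈ s1.inSet (s1.after σ) then some a' else none) = some a ↔ _
        rw [if_neg hmem]
        constructor
        · intro h'; cases h'
        · rintro ⟨h1, h2⟩; injection h1 with h1; subst h1; exact absurd h2 hmem
  have hvalid : ∀ (π : Path In Out State1) (a : In), IsPath s1 π →
      f1fun (π.map Prod.fst) = some a → ∃ q', s1.tr (lastState s1 π) (Sum.inl a) q' := by
    intro π a hπ hf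
    exact ((hfs _ a).1 hf).2 (lastState s1 π) (lastState_mem_after s1 hπ)
  set fi1 : InStrat s1 := ⟨fun π => f1fun (π.map Prod.fst), hvalid⟩ with hfi1
  have htb1 : TraceBased s1 fi1 := by
    intro π π' _ _ heq
    show f1fun (π.map Prod.fst) = f1fun (π'.map Prod.fst)
    rw [heq]
  have hfi1f : ∀ π : Path In Out State1, fi1.f π = f1fun (π.map Prod.fst) := fun _ => rfl
  -- the run on s1
  set P1 : ℕ → Path In Out State1 :=
    fun n => (gstep s1 fi1 fo1 fd1 fr1)^[n] ([] : Path In Out State1) with hP1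
  have hP1succ : ∀ n, P1 (n+1) = gstep s1 fi1 fo1 fd1 fr1 (P1 n) := fun n =>
    Function.iterate_succ_apply' _ n []
  -- the invariant along the run
  have Inv : ∀ n, IsPath s1 (P1 n) ∧ (P1 n).map Prod.fst ∈ s1.OE ∧
      (P1 n).map Prod.fst ∈ s2.IU ∧ (s2.after ((P1 n).map Prod.fst)).Nonempty := by
    intro n
    induction n with
    | zero => exact ⟨isPath_nil s1, nil_mem_OE s1, nil_mem_IU s2, ⟨s2.init, rfl⟩⟩
    | succ n ih =>
      obtain ⟨hpath, hoe, hiu, hne⟩ := ih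
      rw [hP1succ]
      rcases gstep_cases s1 fi1 fo1 fd1 fr1 hpath with ⟨hfix, -, -⟩ |
        ⟨a, q, hfia, htr1, hext⟩ | ⟨x, q, hfox, htr1, hext⟩
      · rw [hfix]; exact ⟨hpath, hoe, hiu, hne⟩
      · rw [hext]
        have hσ : (P1 n ++ [(Sum.inl a, q)]).map Prod.fst
            = (P1 n).map Prod.fst ++ [Sum.inl a] := by simp
        rw [hσ]
        obtain ⟨hga, hmem1⟩ := (hfs _ a).1 ((hfi1f (P1 n)) ▸ hfia)
        have ha2 : a ∈ s2.inSet (s2.after ((P1 n).map Prod.fst)) := gkey _ a hga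
        refine ⟨(isPath_concat_iff s1 _ _).2 ⟨hpath, htr1⟩, OE_concat_in hoe,
          IU_concat_in hiu ha2, ?_⟩
        rw [after_concat]
        obtain ⟨q0, hq0⟩ := hne
        obtain ⟨q0', hq0'⟩ := ha2 q0 hq0
        exact ⟨q0', q0, hq0, hq0'⟩
      · rw [hext]
        have hσ : (P1 n ++ [(Sum.inr x, q)]).map Prod.fst
            = (P1 n).map Prod.fst ++ [Sum.inr x] := by simp
        rw [hσ]
        have hx1 : x ∈ s1.outSet (s1.after ((P1 n).map Prod.fst)) :=
          ⟨lastState s1 (P1 n), lastState_mem_after s1 hpath, q, htr1⟩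
        have hoe' := OE_concat_out hoe hx1
        have hiu' := IU_concat_out (x := x) hiu
        have h2 := h (Set.mem_inter hoe' hiu')
        have hx2 : x ∈ s2.outSet (s2.after ((P1 n).map Prod.fst)) :=
          h2.2 ((P1 n).map Prod.fst) x [] rfl
        refine ⟨(isPath_concat_iff s1 _ _).2 ⟨hpath, htr1⟩, hoe', hiu', ?_⟩
        rw [after_concat]
        obtain ⟨q0, hq0, q', hq'⟩ := hx2
        exact ⟨q', q0, hq0, hq'⟩
  -- structure of the run
  have runcases : ∀ n, (P1 (n+1) = P1 n ∧ fi1.f (P1 n) = none ∧ fo1.f (P1 n) = none) ∨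
      (∃ p : (In ⊕ Out) × State1, s1.tr (lastState s1 (P1 n)) p.1 p.2 ∧
        P1 (n+1) = P1 n ++ [p] ∧
        ((∃ a, p.1 = Sum.inl a ∧ fi1.f (P1 n) = some a) ∨
         (∃ x, p.1 = Sum.inr x ∧ fo1.f (P1 n) = some x))) := by
    intro n
    rcases gstep_cases s1 fi1 fo1 fd1 fr1 (Inv n).1 with ⟨hfix, h1, h2⟩ |
      ⟨a, q, hfia, htr1, hext⟩ | ⟨x, q, hfox, htr1, hext⟩
    · left; exact ⟨by rw [hP1succ, hfix], h1, h2⟩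
    · right; exact ⟨(Sum.inl a, q), htr1, by rw [hP1succ, hext], Or.inl ⟨a, rfl, hfia⟩⟩
    · right; exact ⟨(Sum.inr x, q), htr1, by rw [hP1succ, hext], Or.inr ⟨x, rfl, hfox⟩⟩
  have hchain : ∀ n, P1 n <+: P1 (n+1) := by
    intro n
    rcases runcases n with ⟨hfix, -, -⟩ | ⟨p, -, hext, -⟩
    · rw [hfix]
    · rw [hext]; exact ⟨[p], rfl⟩
  have hpre : ∀ i j, i ≤ j → P1 i <+: P1 j := by
    intro i j hij
    induction j, hij using Nat.le_induction with
    | base => exact List.prefix_refl _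
    | succ m hm ih => exact ih.trans (hchain m)
  have hdet : ∀ n, P1 ((P1 n).length) = P1 n := by
    intro n
    induction n with
    | zero => rfl
    | succ n ih =>
      rcases runcases n with ⟨hfix, -, -⟩ | ⟨p, -, hext, -⟩
      · rw [hfix]; exact ih
      · have e1 : (P1 (n+1)).length = (P1 n).length + 1 := by rw [hext]; simp
        rw [e1, hP1succ, ih, ← hP1succ]
  -- no-input-at-stall fact
  have hfi1none : ∀ n, fi1.f (P1 n) = none → g ((P1 n).map Prod.fst) = none := by
    intro n hnone
    by_contra hgc
    obtain ⟨a, hga⟩ := Option.ne_none_iff_exists'.1 hgc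
    obtain ⟨hpath, hoe, hiu, hne⟩ := Inv n
    have ha2 := gkey _ a hga
    have hmem := h (Set.mem_inter (OE_concat_in hoe) (IU_concat_in hiu ha2))
    have ha1 : a ∈ s1.inSet (s1.after ((P1 n).map Prod.fst)) :=
      hmem.1 ((P1 n).map Prod.fst) a [] rfl
    have : fi1.f (P1 n) = some a := by
      rw [hfi1f]; exact (hfs _ a).2 ⟨hga, ha1⟩
    rw [this] at hnone; cases hnone
  -- construct the scripted run on s2
  have hqrex : ∃ qr : ℕ → State2, qr 0 = s2.init ∧
      ∀ n p, (P1 (n+1))[n]? = some p → s2.tr (qr n) p.1 (qr (n+1)) := by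
    by_cases hst : ∃ n, P1 (n+1) = P1 n
    · -- finite run: pick a finite realizing path in s2
      obtain ⟨n0, hn0⟩ := hst
      have hfix : ∀ m, n0 ≤ m → P1 m = P1 n0 := by
        intro m hm
        induction m, hm using Nat.le_induction with
        | base => rfl
        | succ m hm ih => rw [hP1succ, ih, ← hP1succ, hn0]
      obtain ⟨q0, hq0⟩ := (Inv n0).2.2.2
      obtain ⟨π2, hπ2, hmap2, hlast2⟩ := (mem_after_iff s2 _ _).1 hq0
      refine ⟨fun n => stateAt s2 π2 n, rfl, ?_⟩
      intro n p hget
      have hget0 : (P1 n0)[n]? = some p := by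
        rcases le_total (n+1) n0 with hle | hle
        · exact get?_eq_of_prefix (hpre _ _ hle) hget
        · rw [hfix (n+1) hle] at hget; exact hget
      have hget1 : (π2[n]?).map Prod.fst = some p.1 := by
        rw [← List.getElem?_map (f := Prod.fst) (l := π2) (i := n), hmap2, List.getElem?_map, hget0]
        rfl
      obtain ⟨p2, hp2, hp2f⟩ := Option.map_eq_some_iff.1 hget1
      have htr2 := hπ2 n p2 hp2
      have hst2 : stateAt s2 π2 (n+1) = p2.2 := by
        show ((π2[n]?).map Prod.snd).getD s2.init = p2.2
        rw [hp2]
        rfl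
      show s2.tr (stateAt s2 π2 n) p.1 (stateAt s2 π2 (n+1))
      rw [hst2, ← hp2f]
      exact htr2
    · -- infinite run: König's lemma
      push_neg at hst
      have hextall : ∀ n, ∃ p : (In ⊕ Out) × State1,
          s1.tr (lastState s1 (P1 n)) p.1 p.2 ∧ P1 (n+1) = P1 n ++ [p] := by
        intro n
        rcases runcases n with ⟨hfixn, -, -⟩ | ⟨p, htr, he, -⟩
        · exact absurd hfixn (hst n)
        · exact ⟨p, htr, he⟩
      set pa : ℕ → (In ⊕ Out) × State1 := fun n => (hextall n).choose with hpa
      set lab : ℕ → In ⊕ Out := fun n => (pa n).1 with hlab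
      have hE : ∀ n, P1 (n+1) = P1 n ++ [pa n] := fun n => (hextall n).choose_spec.2
      have hlenE : ∀ n, (P1 n).length = n := by
        intro n
        induction n with
        | zero => rfl
        | succ m ih => rw [hE m]; simp [ih]
      have hA : ∀ k, s2.after ((P1 k).map Prod.fst) = iterStep s2 lab {s2.init} 0 k := by
        intro k
        induction k with
        | zero => rfl
        | succ m ih =>
          rw [hE m]
          have hmm : (P1 m ++ [pa m]).map Prod.fst
              = (P1 m).map Prod.fst ++ [lab m] := by simp [hlab]
          rw [hmm, after_concat, ih]
          show _ = s2.step (iterStep s2 lab {s2.init} 0 m) (lab (0+m))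
          rw [Nat.zero_add]
      have hbase : ∀ k, (iterStep s2 lab {s2.init} 0 k).Nonempty := by
        intro k; rw [← hA k]; exact (Inv k).2.2.2
      let qrS : ∀ n : ℕ, {q : State2 // ∀ k, (iterStep s2 lab {q} n k).Nonempty} :=
        fun n => Nat.rec ⟨s2.init, hbase⟩
          (fun m ih => ⟨(koenig_succ hfin lab m ih.1 ih.2).choose,
            (koenig_succ hfin lab m ih.1 ih.2).choose_spec.2⟩) n
      refine ⟨fun n => (qrS n).1, rfl, ?_⟩
      intro n p hget
      have hplen : (P1 (n+1))[n]? = some (pa n) := by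
        have h1 := (List.getElem?_concat_length (l := P1 n) (a := pa n))
        rw [hlenE n] at h1
        rw [hE n]
        exact h1
      rw [hget] at hplen
      injection hplen with hplen
      rw [hplen]
      exact (koenig_succ hfin lab n (qrS n).1 (qrS n).2).choose_spec.1
  obtain ⟨qr, hq0, Hqr⟩ := hqrex
  -- scripted strategies on s2
  set nextLab : ℕ → Option (In ⊕ Out) :=
    fun k => ((P1 (k+1))[k]?).map Prod.fst with hnextLab
  set Matches : Path In Out State2 → Prop :=
    fun π => ∀ k p2, π[k]? = some p2 → p2.2 = qr (k+1) with hMdef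
  have hlastQ : ∀ π : Path In Out State2, Matches π → lastState s2 π = qr π.length := by
    intro π hM
    rcases List.eq_nil_or_concat π with rfl | ⟨π0, p, rfl⟩
    · exact hq0.symm
    · rw [List.concat_eq_append, lastState_concat]
      have := hM π0.length p (by rw [List.concat_eq_append]; exact List.getElem?_concat_length)
      rw [this]
      congr 1
      simp [List.concat_eq_append]
  have htrQ : ∀ π : Path In Out State2, Matches π → ∀ ℓ, nextLab π.length = some ℓ →
      s2.tr (lastState s2 π) ℓ (qr (π.length + 1)) := by
    intro π hM ℓ hnl
    obtain ⟨p, hp, hpf⟩ := Option.map_eq_some_iff.1 hnl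
    rw [hlastQ π hM, ← hpf]
    exact Hqr π.length p hp
  have ho2valid : ∀ (π : Path In Out State2) (x : Out), IsPath s2 π →
      (if Matches π then
        (match nextLab π.length with
         | some (Sum.inr y) => some y
         | _ => none)
       else none) = some x →
      ∃ q', s2.tr (lastState s2 π) (Sum.inr x) q' := by
    intro π x _ hfx
    by_cases hM : Matches π
    · rw [if_pos hM] at hfx
      rcases hnl : nextLab π.length with _ | ℓ
      · rw [hnl] at hfx; cases hfx
      · rcases ℓ with a | y
        · rw [hnl] at hfx; cases hfx
        · rw [hnl] at hfx
          have hyx : some y = some x := hfx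
          injection hyx with hyx
          subst hyx
          exact ⟨qr (π.length + 1), htrQ π hM _ hnl⟩
    · rw [if_neg hM] at hfx; cases hfx
  set fo2 : OutStrat s2 := ⟨fun π =>
    if Matches π then
      (match nextLab π.length with
       | some (Sum.inr y) => some y
       | _ => none)
    else none, ho2valid⟩ with hfo2
  have hd2total : ∀ (π : Path In Out State2) (ℓ : In ⊕ Out), IsPath s2 π →
      (∃ q', s2.tr (lastState s2 π) ℓ q') →
      ((if Matches π ∧ nextLab π.length = some ℓ then some (qr (π.length + 1))
        else if hex : ∃ q', s2.tr (lastState s2 π) ℓ q' then some hex.choose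
        else none) : Option State2).isSome := by
    intro π ℓ _ hex
    by_cases h1 : Matches π ∧ nextLab π.length = some ℓ
    · rw [if_pos h1]; rfl
    · rw [if_neg h1, dif_pos hex]; rfl
  have hd2valid : ∀ (π : Path In Out State2) (ℓ : In ⊕ Out) (q' : State2), IsPath s2 π →
      (if Matches π ∧ nextLab π.length = some ℓ then some (qr (π.length + 1))
       else if hex : ∃ q'', s2.tr (lastState s2 π) ℓ q'' then some hex.choose
       else none) = some q' →
      s2.tr (lastState s2 π) ℓ q' := by
    intro π ℓ q' _ hq'
    by_cases h1 : Matches π ∧ nextLab π.length = some ℓ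
    · rw [if_pos h1] at hq'
      injection hq' with hq'
      rw [← hq']
      exact htrQ π h1.1 ℓ h1.2
    · rw [if_neg h1] at hq'
      by_cases hex : ∃ q'', s2.tr (lastState s2 π) ℓ q''
      · rw [dif_pos hex] at hq'
        injection hq' with hq'
        rw [← hq']
        exact hex.choose_spec
      · rw [dif_neg hex] at hq'; cases hq'
  set fd2 : DetStrat s2 := ⟨fun π ℓ =>
    if Matches π ∧ nextLab π.length = some ℓ then some (qr (π.length + 1))
    else if hex : ∃ q', s2.tr (lastState s2 π) ℓ q' then some hex.choose
    else none, hd2total, hd2valid⟩ with hfd2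
  set fr2 : RaceStrat In Out State2 := fun π =>
    match nextLab π.length with
    | some (Sum.inr _) => true
    | _ => false
    with hfr2
  -- the run on s2
  set P2 : ℕ → Path In Out State2 :=
    fun n => (gstep s2 fi2 fo2 fd2 fr2)^[n] ([] : Path In Out State2) with hP2
  have hP2succ : ∀ n, P2 (n+1) = gstep s2 fi2 fo2 fd2 fr2 (P2 n) := fun n =>
    Function.iterate_succ_apply' _ n []
  -- the simulation invariant
  have sim : ∀ n, (P2 n).map Prod.fst = (P1 n).map Prod.fst ∧
      Matches (P2 n) ∧ IsPath s2 (P2 n) := by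
    intro n
    induction n with
    | zero =>
      refine ⟨rfl, ?_, isPath_nil s2⟩
      intro k p2 hk
      rw [show P2 0 = ([] : Path In Out State2) from rfl] at hk
      simp at hk
    | succ n ih =>
      obtain ⟨hmeq, hM, hpath2⟩ := ih
      have hm2 : (P2 n).length = (P1 n).length := by
        rw [← List.length_map (f := Prod.fst) (as := P2 n), hmeq, List.length_map]
      rw [hP2succ]
      rcases runcases n with ⟨hfixn, hfi1n, hfo1n⟩ | ⟨p, htr1, hextn, hsrc⟩
      · -- stall on both sides
        have hnl : nextLab (P1 n).length = none := by
          show ((P1 ((P1 n).length + 1))[((P1 n).length)]?).map Prod.fst = none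
          rw [hP1succ ((P1 n).length), hdet n, ← hP1succ n, hfixn,
            List.getElem?_eq_none_iff.2 (le_refl (P1 n).length)]
          rfl
        have hfo2n : fo2.f (P2 n) = none := by
          show (if Matches (P2 n) then
              (match nextLab (P2 n).length with
               | some (Sum.inr y) => some y
               | _ => none)
            else none) = none
          by_cases hMc : Matches (P2 n)
          · rw [if_pos hMc, hm2, hnl]
          · rw [if_neg hMc]
        have hfi2n : fi2.f (P2 n) = none := by
          rw [← g_eq (P2 n) hpath2, hmeq]
          exact hfi1none n hfi1n
        have hfix2 : gstep s2 fi2 fo2 fd2 fr2 (P2 n) = P2 n := by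
          rw [IA.gstep, hfi2n, hfo2n]
        rw [hfix2, hfixn]
        exact ⟨hmeq, hM, hpath2⟩
      · -- step on both sides
        have hnl : nextLab (P1 n).length = some p.1 := by
          show ((P1 ((P1 n).length + 1))[((P1 n).length)]?).map Prod.fst = some p.1
          rw [hP1succ ((P1 n).length), hdet n, ← hP1succ n, hextn,
            List.getElem?_concat_length]
          rfl
        have hdstep : fd2.f (P2 n) p.1 = some (qr ((P2 n).length + 1)) := by
          show (if Matches (P2 n) ∧ nextLab (P2 n).length = some p.1
              then some (qr ((P2 n).length + 1))
              else if hex : ∃ q', s2.tr (lastState s2 (P2 n)) p.1 q' then some hex.choose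
              else none) = some (qr ((P2 n).length + 1))
          rw [if_pos ⟨hM, by rw [hm2]; exact hnl⟩]
        have hpush : IA.push s2 fd2 (P2 n) p.1
            = P2 n ++ [(p.1, qr ((P2 n).length + 1))] := by
          rw [IA.push, hdstep]
        have htrq : s2.tr (lastState s2 (P2 n)) p.1 (qr ((P2 n).length + 1)) := by
          have := htrQ (P2 n) hM p.1 (by rw [hm2]; exact hnl)
          exact this
        have hstep2 : gstep s2 fi2 fo2 fd2 fr2 (P2 n)
            = P2 n ++ [(p.1, qr ((P2 n).length + 1))] := by
          rcases hsrc with ⟨a, hpa, hfia⟩ | ⟨x, hpx, hfox⟩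
          · -- input step
            have hga : g ((P1 n).map Prod.fst) = some a :=
              ((hfs _ a).1 ((hfi1f (P1 n)) ▸ hfia)).1
            have hfi2n : fi2.f (P2 n) = some a := by
              rw [← g_eq (P2 n) hpath2, hmeq, hga]
            have hfo2n : fo2.f (P2 n) = none := by
              show (if Matches (P2 n) then
                  (match nextLab (P2 n).length with
                   | some (Sum.inr y) => some y
                   | _ => none)
                else none) = none
              by_cases hMc : Matches (P2 n)
              · rw [if_pos hMc, hm2, hnl, hpa]
              · rw [if_neg hMc]
            rw [IA.gstep, hfi2n, hfo2n]
            show s2.push fd2 (P2 n) (Sum.inl a) = _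
            rw [← hpa]
            exact hpush
          · -- output step
            have hfo2x : fo2.f (P2 n) = some x := by
              show (if Matches (P2 n) then
                  (match nextLab (P2 n).length with
                   | some (Sum.inr y) => some y
                   | _ => none)
                else none) = some x
              rw [if_pos hM, hm2, hnl, hpx]
            have hr2 : fr2 (P2 n) = true := by
              show (match nextLab (P2 n).length with
                    | some (Sum.inr _) => true
                    | _ => false) = true
              rw [hm2, hnl, hpx]
            rcases hfi2c : fi2.f (P2 n) with _ | a
            · rw [IA.gstep, hfi2c, hfo2x]
              show s2.push fd2 (P2 n) (Sum.inr x) = _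
              rw [← hpx]
              exact hpush
            · rw [IA.gstep, hfi2c, hfo2x]
              show (if fr2 (P2 n) = true then s2.push fd2 (P2 n) (Sum.inr x)
                else s2.push fd2 (P2 n) (Sum.inl a)) = _
              rw [hr2, if_pos rfl, ← hpx]
              exact hpush
        rw [hstep2, hextn]
        refine ⟨by simp [hmeq], ?_, ?_⟩
        · intro k p2 hk
          rcases get?_concat_cases hk with h' | ⟨hk1, hk2⟩
          · exact hM _ _ h'
          · rw [hk2, hk1]
        · exact (isPath_concat_iff s2 _ _).2 ⟨hpath2, htrq⟩
  -- conclude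
  refine ⟨fi1, htb1, fo2, fd2, fr2, fun n => ?_⟩
  show ((P1 (n+1))[n]?).map Prod.fst = ((P2 (n+1))[n]?).map Prod.fst
  rw [← List.getElem?_map, ← List.getElem?_map, ← (sim (n+1)).1]
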